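/- Let X be a set and let (d_j) be a monotone increasing sequence of distance functions on X with uniform diameter bound D_0 whose pointwise limit d_∞ makes (X, d_∞) a compact metric space. Then (X, d_j) converges to (X, d_∞) in the Gromov–Hausdorff sense: d_GH((X,d_j),(X,d_∞)) → 0 as j → ∞. -/
import Mathlib


universe u

/-- A distance function satisfying the metric space axioms. -/
def IsMetricFn {Z : Type u} (d : Z → Z → ℝ) : Prop :=
  (∀ z w, 0 ≤ d z w) ∧ (∀ z, d z z = 0) ∧ (∀ z w, d z w = 0 → z = w) ∧
    (∀ z w, d z w = d w z) ∧ (∀ z w v, d z v ≤ d z w + d w v)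

/-- A distance preserving map between spaces with distance functions. -/
def IsDistPreserving {X : Type u} {Z : Type u} (dX : X → X → ℝ) (dZ : Z → Z → ℝ)
    (f : X → Z) : Prop := ∀ x y, dZ (f x) (f y) = dX x y

/-- The Hausdorff distance between `A` and `B` in `(Z,d)` is at most `r`. -/
def HausDistLe {Z : Type u} (d : Z → Z → ℝ) (A B : Set Z) (r : ℝ) : Prop :=
  (∀ a ∈ A, ∃ b ∈ B, d a b ≤ r) ∧ (∀ b ∈ B, ∃ a ∈ A, d a b ≤ r)

/-- The Gromov–Hausdorff distance between `(X,dX)` and `(Y,dY)` is at most `r`: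
there is a common metric space `Z` with distance preserving maps whose images
are at Hausdorff distance at most `r`. -/
def GHDistLe {X Y : Type u} (dX : X → X → ℝ) (dY : Y → Y → ℝ) (r : ℝ) : Prop :=
  ∃ (Z : Type u) (dZ : Z → Z → ℝ) (fa : X → Z) (fb : Y → Z),
    IsMetricFn dZ ∧ IsDistPreserving dX dZ fa ∧ IsDistPreserving dY dZ fb ∧
      HausDistLe dZ (Set.range fa) (Set.range fb) r

/-- The cross distance used in the gluing. -/
noncomputable def crossDist {X : Type u} [MetricSpace X] (dj : X → X → ℝ) (ε : ℝ)
    (x y : X) : ℝ := ε / 2 + ⨅ p : X, (dj x p + dist p y)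

/-- The glued distance on `X ⊕ X`. -/
noncomputable def glueDist {X : Type u} [MetricSpace X] (dj c : X → X → ℝ) :
    X ⊕ X → X ⊕ X → ℝ
  | .inl x, .inl y => dj x y
  | .inl x, .inr y => c x y
  | .inr y, .inl x => c x y
  | .inr x, .inr y => dist x y

/-- Auxiliary: if `dj ≤ dist ≤ dj + ε` pointwise, then `GHDistLe dj dist ε`,
via the glued metric on `X ⊕ X`. -/
lemma GHDistLe_of_gap {X : Type u} [MetricSpace X] (dj : X → X → ℝ) (ε : ℝ) (hε : 0 < ε)
    (hnonneg : ∀ x y, 0 ≤ dj x y)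
    (hself : ∀ x, dj x x = 0)
    (hdef : ∀ x y, dj x y = 0 → x = y)
    (hsymm : ∀ x y, dj x y = dj y x)
    (htri : ∀ x y z, dj x z ≤ dj x y + dj y z)
    (hle : ∀ x y, dj x y ≤ dist x y)
    (hgap : ∀ x y, dist x y ≤ dj x y + ε) :
    GHDistLe dj (fun x y : X => dist x y) ε := by
  by_cases hX : Nonempty X
  · have hbdd : ∀ x y : X, BddBelow (Set.range fun p => dj x p + dist p y) := by
      intro x y
      refine ⟨0, ?_⟩
      rintro _ ⟨p, rfl⟩
      exact add_nonneg (hnonneg x p) dist_nonneg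
    have hcdef : ∀ x y : X, crossDist dj ε x y = ε / 2 + ⨅ p : X, (dj x p + dist p y) :=
      fun _ _ => rfl
    have cle : ∀ x y p : X, crossDist dj ε x y ≤ ε / 2 + (dj x p + dist p y) := by
      intro x y p
      have := ciInf_le (hbdd x y) p
      rw [hcdef]; linarith
    have cge : ∀ x y : X, ε / 2 ≤ crossDist dj ε x y := by
      intro x y
      have h : (0 : ℝ) ≤ ⨅ p : X, (dj x p + dist p y) :=
        Real.iInf_nonneg fun p => add_nonneg (hnonneg x p) dist_nonneg
      rw [hcdef]; linarith
    have t1 : ∀ x w v : X, crossDist dj ε x v ≤ dj x w + crossDist dj ε w v := by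
      intro x w v
      have h : crossDist dj ε x v - dj x w - ε / 2 ≤ ⨅ p : X, (dj w p + dist p v) := by
        apply le_ciInf
        intro p
        have h1 := cle x v p
        have h2 := htri x w p
        linarith
      rw [hcdef w v]; linarith
    have t2 : ∀ x w v : X, crossDist dj ε x v ≤ crossDist dj ε x w + dist w v := by
      intro x w v
      have h : crossDist dj ε x v - dist w v - ε / 2 ≤ ⨅ p : X, (dj x p + dist p w) := by
        apply le_ciInf
        intro p
        have h1 := cle x v p
        have h2 := dist_triangle p w v
        linarith
      rw [hcdef x w]; linarith
    have t3 : ∀ x w v : X, dj x v ≤ crossDist dj ε x w + crossDist dj ε v w := by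
      intro x w v
      have h : ∀ p q : X, dj x v ≤ (dj x p + dist p w) + (dj v q + dist q w) + ε := by
        intro p q
        have h1 := htri x p v
        have h2 := htri p q v
        have h3 := hle p q
        have h4 := dist_triangle p w q
        have h5 := dist_comm w q
        have h6 := hsymm q v
        linarith
      have h2 : dj x v - ε / 2 - crossDist dj ε v w ≤ ⨅ p : X, (dj x p + dist p w) := by
        apply le_ciInf
        intro p
        have h3 : dj x v - ε - (dj x p + dist p w) ≤ ⨅ q : X, (dj v q + dist q w) := by
          apply le_ciInf
          intro q
          have := h p q
          linarith
        rw [hcdef v w]; linarith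
      rw [hcdef x w]; linarith
    have t4 : ∀ w y y' : X, dist y y' ≤ crossDist dj ε w y + crossDist dj ε w y' := by
      intro w y y'
      have h : ∀ p q : X, dist y y' ≤ (dj w p + dist p y) + (dj w q + dist q y') + ε := by
        intro p q
        have h5 := hgap p q
        have h6 := htri p w q
        have h7 := hsymm p w
        have e : dist y y' ≤ dist y p + dist p q + dist q y' := by
          have := dist_triangle y p y'
          have := dist_triangle p q y'
          linarith
        have hc1 := dist_comm y p
        linarith
      have h2 : dist y y' - ε / 2 - crossDist dj ε w y' ≤ ⨅ p : X, (dj w p + dist p y) := by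
        apply le_ciInf
        intro p
        have h3 : dist y y' - ε - (dj w p + dist p y) ≤ ⨅ q : X, (dj w q + dist q y') := by
          apply le_ciInf
          intro q
          have := h p q
          linarith
        rw [hcdef w y']; linarith
      rw [hcdef w y]; linarith
    refine ⟨X ⊕ X, glueDist dj (crossDist dj ε), Sum.inl, Sum.inr, ⟨?_, ?_, ?_, ?_, ?_⟩,
      fun x y => rfl, fun x y => rfl, ?_, ?_⟩
    · rintro (x | x) (y | y) <;> simp only [glueDist]
      · exact hnonneg x y
      · exact le_trans (by linarith : (0 : ℝ) ≤ ε / 2) (cge x y)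
      · exact le_trans (by linarith : (0 : ℝ) ≤ ε / 2) (cge y x)
      · exact dist_nonneg
    · rintro (x | x) <;> simp only [glueDist]
      · exact hself x
      · exact dist_self x
    · rintro (x | x) (y | y) h <;> simp only [glueDist] at h
      · exact congrArg Sum.inl (hdef x y h)
      · exact absurd h (by have := cge x y; intro h'; rw [h'] at this; linarith)
      · exact absurd h (by have := cge y x; intro h'; rw [h'] at this; linarith)
      · exact congrArg Sum.inr (eq_of_dist_eq_zero h)
    · rintro (x | x) (y | y) <;> simp only [glueDist]
      · exact hsymm x y
      · exact dist_comm x y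
    · rintro (x | x) (w | w) (v | v) <;> simp only [glueDist]
      · exact htri x w v
      · exact t1 x w v
      · exact t3 x w v
      · exact t2 x w v
      · have := t1 v w x
        linarith [hsymm w v, hsymm v w]
      · exact t4 w x v
      · have := t2 v w x
        linarith [dist_comm (α := X) x w, dist_comm (α := X) w x]
      · exact dist_triangle x w v
    · rintro _ ⟨x, rfl⟩
      refine ⟨Sum.inr x, ⟨x, rfl⟩, ?_⟩
      have h := cle x x x
      rw [hself x, dist_self x] at h
      show crossDist dj ε x x ≤ ε
      linarith
    · rintro _ ⟨x, rfl⟩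
      refine ⟨Sum.inl x, ⟨x, rfl⟩, ?_⟩
      have h := cle x x x
      rw [hself x, dist_self x] at h
      show crossDist dj ε x x ≤ ε
      linarith
  · have hE : IsEmpty X := not_nonempty_iff.mp hX
    refine ⟨X, dj, id, id, ⟨hnonneg, hself, hdef, hsymm, htri⟩,
      fun x y => rfl, fun x _ => isEmptyElim x, ?_, ?_⟩
    · rintro _ ⟨x, rfl⟩
      exact isEmptyElim x
    · rintro _ ⟨x, rfl⟩
      exact isEmptyElim x

/-- For a monotone increasing sequence of distance functions `d j`
with uniform diameter bound `D₀` converging pointwise to the distance of a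
compact metric space `(X, dist)`, we have Gromov–Hausdorff convergence
`d_GH((X,d_j),(X,d_∞)) → 0`. -/
theorem monotone_distances_GH_convergence
    {X : Type u} [MetricSpace X] [CompactSpace X]
    (d : ℕ → X → X → ℝ) (D0 : ℝ)
    (hnonneg : ∀ j x y, 0 ≤ d j x y)
    (hself : ∀ j x, d j x x = 0)
    (hdef : ∀ j x y, d j x y = 0 → x = y)
    (hsymm : ∀ j x y, d j x y = d j y x)
    (htri : ∀ j x y z, d j x z ≤ d j x y + d j y z)
    (hmono : ∀ j x y, d j x y ≤ d (j + 1) x y)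
    (hbd : ∀ j x y, d j x y ≤ D0)
    (hlim : ∀ x y, Filter.Tendsto (fun j => d j x y) Filter.atTop (nhds (dist x y))) :
    ∀ ε > (0 : ℝ), ∃ N : ℕ, ∀ j ≥ N,
      GHDistLe (d j) (fun x y : X => dist x y) ε := by
  intro ε hε
  have hmono' : ∀ x y : X, Monotone fun j => d j x y := fun x y =>
    monotone_nat_of_le_succ fun j => hmono j x y
  have hle : ∀ j (x y : X), d j x y ≤ dist x y := fun j x y =>
    (hmono' x y).ge_of_tendsto (hlim x y) j
  have hcont : ∀ N, Continuous fun p : X × X => d N p.1 p.2 := by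
    intro N
    rw [Metric.continuous_iff]
    rintro ⟨x, y⟩ r hr
    refine ⟨r / 2, by linarith, ?_⟩
    rintro ⟨x', y'⟩ hlt
    rw [Prod.dist_eq, max_lt_iff] at hlt
    obtain ⟨h1, h2⟩ := hlt
    simp only at h1 h2 ⊢
    rw [Real.dist_eq, abs_lt]
    have e1 : d N x' y' ≤ d N x' x + d N x y + d N y y' := by
      have := htri N x' x y'
      have := htri N x y y'
      linarith
    have e2 : d N x y ≤ d N x x' + d N x' y' + d N y' y := by
      have := htri N x x' y
      have := htri N x' y' y
      linarith
    constructor <;>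
      linarith [hle N x' x, hle N y y', hle N x x', hle N y' y,
        dist_comm x x', dist_comm y y', dist_comm (α := X) y' y]
  have key : ∃ N : ℕ, ∀ x y : X, dist x y ≤ d N x y + ε := by
    set U : ℕ → Set (X × X) := fun N => {p | dist p.1 p.2 < d N p.1 p.2 + ε} with hU
    have hopen : ∀ N, IsOpen (U N) := fun N =>
      isOpen_lt continuous_dist ((hcont N).add continuous_const)
    have hcover : Set.univ ⊆ ⋃ N, U N := by
      rintro ⟨x, y⟩ -
      have h := (hlim x y).eventually
        (eventually_gt_nhds (show dist x y - ε < dist x y by linarith))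
      obtain ⟨N, hN⟩ := h.exists
      exact Set.mem_iUnion.mpr ⟨N, by simp only [hU, Set.mem_setOf_eq]; linarith⟩
    obtain ⟨t, ht⟩ := isCompact_univ.elim_finite_subcover U hopen hcover
    refine ⟨t.sup id, fun x y => ?_⟩
    have hx : (x, y) ∈ ⋃ i ∈ t, U i := ht (Set.mem_univ _)
    simp only [Set.mem_iUnion] at hx
    obtain ⟨i, hit, hi⟩ := hx
    have hmi : d i x y ≤ d (t.sup id) x y := hmono' x y (Finset.le_sup (f := id) hit)
    simp only [hU, Set.mem_setOf_eq] at hi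
    linarith
  obtain ⟨N, hN⟩ := key
  refine ⟨N, fun j hj => ?_⟩
  have hgap : ∀ x y : X, dist x y ≤ d j x y + ε := fun x y =>
    (hN x y).trans (by have := hmono' x y hj; linarith)
  exact GHDistLe_of_gap (d j) ε hε (hnonneg j) (hself j) (hdef j) (hsymm j) (htri j)
    (hle j) hgap
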